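/- Let 0 < q ≤ 2, let f, g : ℝ → ℝ be continuous nondecreasing with f positive and g(t) ≤ 0 for all t, and set h(t) = (g⁻(t)/f(t))^{2/q} f(t) where g⁻ = -g. Then for every a ∈ ℝ and t ≥ a: ∫_a^∞ dt / (∫_a^t e^{-2∫_s^t h(r) dr} f(s) ds)^{1/2} ≥ (1/2) ∫_a^∞ [ 1/(∫_a^t f(s) ds)^{1/2} + (g⁻(t)/f(t))^{1/q} ] dt. -/

import Mathlib

open Real MeasureTheory Set Filter

/-!
Write `I(t) = ∫_a^t e^{-2∫_s^t h} f(s) ds`. Since `h ≥ 0`, `I(t) ≤ ∫_a^t f`. Since `f` is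
nondecreasing and `h` nonincreasing, `f(s) h(t) ≤ f(t) h(s)` for `s ≤ t`, and
`e^{-2∫_s^t h} h(s)` is the derivative of `e^{-2∫_s^t h} / 2`, so `I(t) h(t) ≤ f(t) / 2`;
with `h = (g⁻/f)^{2/q} f` this reads `I(t) (g⁻(t)/f(t))^{2/q} ≤ 1/2`. Each bound controls one
of the two terms on the left by `I(t)^{-1/2}`, hence so does their mean.
-/

noncomputable def dampedIntegral (h f : ℝ → ℝ) (a t : ℝ) : ℝ :=
  ∫ s in a..t, exp (-2 * ∫ r in s..t, h r) * f s

section DampedIntegral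

variable {h f : ℝ → ℝ}

lemma hasDerivAt_integral_left (hh : Continuous h) (s t : ℝ) :
    HasDerivAt (fun u => ∫ r in u..t, h r) (-h s) s :=
  intervalIntegral.integral_hasDerivAt_left (hh.intervalIntegrable _ _)
    (hh.stronglyMeasurableAtFilter _ _) hh.continuousAt

lemma continuous_exp_integral_left_mul (hh : Continuous h) (hf : Continuous f) (t : ℝ) :
    Continuous fun s => exp (-2 * ∫ r in s..t, h r) * f s := by
  have hH : Continuous fun u => ∫ r in u..t, h r :=
    continuous_iff_continuousAt.mpr fun s => (hasDerivAt_integral_left hh s t).continuousAt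
  exact (continuous_const.mul hH).rexp.mul hf

lemma integral_exp_integral_left_mul_self (hh : Continuous h) (a t : ℝ) :
    ∫ s in a..t, exp (-2 * ∫ r in s..t, h r) * h s =
      (1 - exp (-2 * ∫ r in a..t, h r)) / 2 := by
  have hderiv : ∀ s, HasDerivAt (fun u => exp (-2 * ∫ r in u..t, h r) / 2)
      (exp (-2 * ∫ r in s..t, h r) * h s) s := fun s =>
    ((((hasDerivAt_integral_left hh s t).const_mul (-2)).exp).div_const 2).congr_deriv (by ring)
  rw [intervalIntegral.integral_eq_sub_of_hasDerivAt (fun s _ => hderiv s)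
    ((continuous_exp_integral_left_mul hh hh t).intervalIntegrable _ _)]
  simp only [intervalIntegral.integral_same, mul_zero, exp_zero]
  ring

lemma dampedIntegral_pos (hh : Continuous h) (hf : Continuous f) (hfpos : ∀ s, 0 < f s)
    {a t : ℝ} (hat : a < t) : 0 < dampedIntegral h f a t :=
  intervalIntegral.intervalIntegral_pos_of_pos_on
    ((continuous_exp_integral_left_mul hh hf t).intervalIntegrable _ _)
    (fun s _ => mul_pos (exp_pos _) (hfpos s)) hat

lemma dampedIntegral_le_integral (hh : Continuous h) (hh0 : ∀ r, 0 ≤ h r) (hf : Continuous f)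
    (hf0 : ∀ s, 0 ≤ f s) {a t : ℝ} (hat : a ≤ t) :
    dampedIntegral h f a t ≤ ∫ s in a..t, f s := by
  refine intervalIntegral.integral_mono_on hat
    ((continuous_exp_integral_left_mul hh hf t).intervalIntegrable _ _)
    (hf.intervalIntegrable _ _) fun s hs => mul_le_of_le_one_left (hf0 s) ?_
  have : 0 ≤ ∫ r in s..t, h r := intervalIntegral.integral_nonneg hs.2 fun r _ => hh0 r
  rw [exp_le_one_iff]
  linarith

lemma dampedIntegral_mul_le (hh : Continuous h) (hh0 : ∀ r, 0 ≤ h r) (hhanti : Antitone h)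
    (hf : Continuous f) (hf0 : ∀ s, 0 ≤ f s) (hfmono : Monotone f) {a t : ℝ} (hat : a ≤ t) :
    dampedIntegral h f a t * h t ≤ f t / 2 := by
  have hcross : ∀ s ∈ Icc a t,
      exp (-2 * ∫ r in s..t, h r) * f s * h t ≤
        f t * (exp (-2 * ∫ r in s..t, h r) * h s) := by
    intro s hs
    have : f s * h t ≤ f t * h s :=
      mul_le_mul (hfmono hs.2) (hhanti hs.2) (hh0 t) (hf0 t)
    nlinarith [exp_pos (-2 * ∫ r in s..t, h r)]
  calc dampedIntegral h f a t * h t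
      = ∫ s in a..t, exp (-2 * ∫ r in s..t, h r) * f s * h t :=
        (intervalIntegral.integral_mul_const _ _).symm
    _ ≤ ∫ s in a..t, f t * (exp (-2 * ∫ r in s..t, h r) * h s) :=
        intervalIntegral.integral_mono_on hat
          (((continuous_exp_integral_left_mul hh hf t).mul continuous_const).intervalIntegrable _ _)
          (((continuous_exp_integral_left_mul hh hh t).const_mul _).intervalIntegrable _ _) hcross
    _ = f t * ((1 - exp (-2 * ∫ r in a..t, h r)) / 2) := by
        rw [intervalIntegral.integral_const_mul, integral_exp_integral_left_mul_self hh]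
    _ ≤ f t / 2 := by nlinarith [exp_pos (-2 * ∫ r in a..t, h r), hf0 t]

end DampedIntegral

lemma antitone_rpow_div_mul {G f : ℝ → ℝ} {p : ℝ} (hGanti : Antitone G)
    (hG0 : ∀ t, 0 ≤ G t) (hfmono : Monotone f) (hfpos : ∀ t, 0 < f t) (hp : 1 ≤ p) :
    Antitone fun t => (G t / f t) ^ p * f t := by
  have hsplit : ∀ t, (G t / f t) ^ p * f t = G t ^ p * f t ^ (1 - p) := fun t => by
    rw [div_rpow (hG0 t) (hfpos t).le, rpow_sub (hfpos t), rpow_one]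
    field_simp
  intro x y hxy
  simp only [hsplit]
  exact mul_le_mul (rpow_le_rpow (hG0 y) (hGanti hxy) (by linarith))
    (rpow_le_rpow_of_nonpos (hfpos x) (hfmono hxy) (by linarith))
    (rpow_nonneg (hfpos y).le _) (rpow_nonneg (hG0 x) _)

lemma rpow_le_one_div_rpow_half_of_mul_le {x y q : ℝ} (hx : 0 < x) (hy : 0 ≤ y)
    (hxy : x * y ^ (2 / q) ≤ 1) : y ^ (1 / q) ≤ 1 / x ^ ((1 : ℝ) / 2) := by
  have hsq : y ^ (1 / q) = (y ^ (2 / q)) ^ ((1 : ℝ) / 2) := by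
    rw [← rpow_mul hy]
    ring_nf
  rw [hsq, le_div_iff₀ (rpow_pos_of_pos hx _), ← mul_rpow (rpow_nonneg hy _) hx.le]
  exact rpow_le_one (mul_nonneg (rpow_nonneg hy _) hx.le) (by linarith) (by norm_num)

section DampedIntegralBounds

variable {h f : ℝ → ℝ} (hh : Continuous h) (hh0 : ∀ r, 0 ≤ h r) (hf : Continuous f)
  (hfpos : ∀ s, 0 < f s) {a t : ℝ} (hat : a < t)
include hh hh0 hf hfpos hat

lemma one_div_rpow_half_integral_le :
    1 / (∫ s in a..t, f s) ^ ((1 : ℝ) / 2) ≤ 1 / dampedIntegral h f a t ^ ((1 : ℝ) / 2) :=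
  have hI := dampedIntegral_pos hh hf hfpos hat
  one_div_le_one_div_of_le (rpow_pos_of_pos hI _) (rpow_le_rpow hI.le
    (dampedIntegral_le_integral hh hh0 hf (fun s => (hfpos s).le) hat.le) (by norm_num))

lemma rpow_le_one_div_rpow_half_dampedIntegral (hhanti : Antitone h) (hfmono : Monotone f)
    {y q : ℝ} (hy : 0 ≤ y) (hht : h t = y ^ (2 / q) * f t) :
    y ^ (1 / q) ≤ 1 / dampedIntegral h f a t ^ ((1 : ℝ) / 2) := by
  refine rpow_le_one_div_rpow_half_of_mul_le (dampedIntegral_pos hh hf hfpos hat) hy ?_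
  have hbound := dampedIntegral_mul_le hh hh0 hhanti hf (fun s => (hfpos s).le) hfmono hat.le
  rw [hht, ← mul_assoc] at hbound
  exact (le_of_mul_le_mul_right (hbound.trans_eq (div_eq_inv_mul _ _)) (hfpos t)).trans
    (by norm_num)

end DampedIntegralBounds

theorem stmt15_general (q : ℝ) (hq0 : 0 < q) (hq2 : q ≤ 2)
    (f g : ℝ → ℝ)
    (hf : Continuous f) (hfpos : ∀ t, 0 < f t) (hfmono : Monotone f)
    (hg : Continuous g) (hgmono : Monotone g)
    (h : ℝ → ℝ) (hh : ∀ t, h t = (max (-g t) 0 / f t) ^ (2 / q) * f t) :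
    ∀ a : ℝ,
      ENNReal.ofReal (1 / 2) *
          ∫⁻ t in Set.Ioi a,
            ENNReal.ofReal
              (1 / (∫ s in a..t, f s) ^ ((1 : ℝ) / 2) +
                (max (-g t) 0 / f t) ^ (1 / q))
        ≤ ∫⁻ t in Set.Ioi a,
            ENNReal.ofReal
              (1 / (∫ s in a..t, Real.exp (-2 * ∫ r in s..t, h r) * f s) ^ ((1 : ℝ) / 2)) := by
  intro a
  have hy0 : ∀ t, 0 ≤ max (-g t) 0 / f t := fun t => div_nonneg (le_max_right _ _) (hfpos t).le
  have hh0 : ∀ t, 0 ≤ h t := fun t => hh t ▸ mul_nonneg (rpow_nonneg (hy0 t) _) (hfpos t).le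
  have hhc : Continuous h := by
    rw [funext hh]
    exact (((hg.neg.max continuous_const).div hf fun t => (hfpos t).ne').rpow_const
      fun _ => Or.inr (by positivity)).mul hf
  have hhanti : Antitone h := funext hh ▸ antitone_rpow_div_mul
    (fun _ _ hxy => max_le_max (neg_le_neg (hgmono hxy)) le_rfl) (fun _ => le_max_right _ _)
    hfmono hfpos ((le_div_iff₀ hq0).mpr (by linarith))
  have hpointwise : ∀ t ∈ Ioi a, 1 / 2 * (1 / (∫ s in a..t, f s) ^ ((1 : ℝ) / 2) +
      (max (-g t) 0 / f t) ^ (1 / q)) ≤ 1 / dampedIntegral h f a t ^ ((1 : ℝ) / 2) := by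
    intro t hat
    linarith [one_div_rpow_half_integral_le hhc hh0 hf hfpos hat,
      rpow_le_one_div_rpow_half_dampedIntegral hhc hh0 hf hfpos hat hhanti hfmono (hy0 t) (hh t)]
  rw [← lintegral_const_mul' _ _ ENNReal.ofReal_ne_top]
  refine setLIntegral_mono' measurableSet_Ioi fun t ht => ?_
  rw [← ENNReal.ofReal_mul (by norm_num)]
  exact ENNReal.ofReal_le_ofReal (hpointwise t ht)

theorem stmt15 (q : ℝ) (hq0 : 0 < q) (hq2 : q ≤ 2)
    (f g : ℝ → ℝ)
    (hf : Continuous f) (hfpos : ∀ t, 0 < f t) (hfmono : Monotone f)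
    (hg : Continuous g) (hgmono : Monotone g) (hgnonpos : ∀ t, g t ≤ 0)
    (h : ℝ → ℝ) (hh : ∀ t, h t = (max (-g t) 0 / f t) ^ (2 / q) * f t) :
    ∀ a : ℝ,
      ENNReal.ofReal (1 / 2) *
          ∫⁻ t in Set.Ioi a,
            ENNReal.ofReal
              (1 / (∫ s in a..t, f s) ^ ((1 : ℝ) / 2) +
                (max (-g t) 0 / f t) ^ (1 / q))
        ≤ ∫⁻ t in Set.Ioi a,
            ENNReal.ofReal
              (1 / (∫ s in a..t, Real.exp (-2 * ∫ r in s..t, h r) * f s) ^ ((1 : ℝ) / 2)) :=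
  stmt15_general q hq0 hq2 f g hf hfpos hfmono hg hgmono h hh
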